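/- Let u ∈ ℝ³ be a unit vector, ε_k ∈ {±1}, r_k > 0, and e_k = ε_k r_k u. Define the almost complex structure J : (ℝ³)ⁿ → (ℝ³)ⁿ by (Jδ)_k = u × δ_k. Then: (1) J commutes with every linearized bending operator: Ã_{ij}(Jδ) = J(Ã_{ij}(δ)) for all δ ∈ (ℝ³)ⁿ and all 1 ≤ i < j ≤ n; (2) J preserves the subspace {δ : Σ_{k=1}^n δ_k = 0}; (3) J preserves the subspace V_e = {δ : there exists v ∈ ℝ³ with δ_k = e_k × v for all k}; explicitly, if δ_k = e_k × v for all k then (Jδ)_k = e_k × w for all k with w = u × v. -/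

import Mathlib

open Matrix

/-- The linearization `Ã_{ij}` at the degenerate configuration `e_k = ε_k r_k u` of the
bending field `B_{ij}`. -/
def Atilde (n : ℕ) (u : Fin 3 → ℝ) (eps r : Fin n → ℝ) (i j : Fin n)
    (δ : Fin n → Fin 3 → ℝ) : Fin n → Fin 3 → ℝ :=
  fun k =>
    if k = i then (eps j * r j) • crossProduct u (δ i) - (eps i * r i) • crossProduct u (δ j)
    else if k = j then (eps i * r i) • crossProduct u (δ j) - (eps j * r j) • crossProduct u (δ i)
    else 0

theorem cross_cross_comm_of_cross_eq_zero {R : Type*} [CommRing R] {u e : Fin 3 → R}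
    (h : u ⨯₃ e = 0) (v : Fin 3 → R) : u ⨯₃ (e ⨯₃ v) = e ⨯₃ (u ⨯₃ v) := by
  rw [leibniz_cross, h, LinearMap.map_zero₂, zero_add]

theorem Atilde_map_of_commute_cross (n : ℕ) (u : Fin 3 → ℝ) (eps r : Fin n → ℝ) (i j : Fin n)
    (L : (Fin 3 → ℝ) →ₗ[ℝ] Fin 3 → ℝ) (hL : ∀ x, u ⨯₃ L x = L (u ⨯₃ x))
    (δ : Fin n → Fin 3 → ℝ) :
    Atilde n u eps r i j (fun k => L (δ k)) = fun k => L (Atilde n u eps r i j δ k) := by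
  funext k
  simp only [Atilde, hL]
  split_ifs <;> simp only [map_sub, map_smul, map_zero]

theorem acs_invariance_general (n : ℕ) (u : Fin 3 → ℝ)
    (eps r : Fin n → ℝ)
    (e : Fin n → Fin 3 → ℝ) (he : ∀ k, e k = (eps k * r k) • u) :
    (∀ (δ : Fin n → Fin 3 → ℝ) (i j : Fin n), i < j →
        Atilde n u eps r i j (fun k => crossProduct u (δ k)) =
          fun k => crossProduct u (Atilde n u eps r i j δ k)) ∧
    (∀ δ : Fin n → Fin 3 → ℝ, ∑ k, δ k = 0 → ∑ k, crossProduct u (δ k) = 0) ∧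
    (∀ (δ : Fin n → Fin 3 → ℝ) (v : Fin 3 → ℝ), (∀ k, δ k = crossProduct (e k) v) →
        ∀ k, crossProduct u (δ k) = crossProduct (e k) (crossProduct u v)) := by
  refine ⟨?_, ?_, ?_⟩
  · exact fun δ i j _ => Atilde_map_of_commute_cross n u eps r i j (crossProduct u) (fun _ => rfl) δ
  · intro δ hδ
    rw [← map_sum, hδ, map_zero]
  · intro δ v hδ k
    have hue : u ⨯₃ e k = 0 := by rw [he, map_smul, cross_self, smul_zero]
    rw [hδ, cross_cross_comm_of_cross_eq_zero hue]

/-- The almost complex structure `J : δ ↦ (u × δ_k)_k` (1) commutes with all the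
linearized bending operators `Ã_{ij}`, (2) preserves the subspace `{δ : ∑ δ_k = 0}`,
and (3) preserves the tangent space `V_e` to the `SO(3)`-orbit: if `δ_k = e_k × v`
for all `k` then `(Jδ)_k = e_k × (u × v)` for all `k`. -/
theorem acs_invariance (n : ℕ) (u : Fin 3 → ℝ) (hu : u ⬝ᵥ u = 1)
    (eps r : Fin n → ℝ) (heps : ∀ k, eps k = 1 ∨ eps k = -1) (hr : ∀ k, 0 < r k)
    (e : Fin n → Fin 3 → ℝ) (he : ∀ k, e k = (eps k * r k) • u) :
    (∀ (δ : Fin n → Fin 3 → ℝ) (i j : Fin n), i < j →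
        Atilde n u eps r i j (fun k => crossProduct u (δ k)) =
          fun k => crossProduct u (Atilde n u eps r i j δ k)) ∧
    (∀ δ : Fin n → Fin 3 → ℝ, ∑ k, δ k = 0 → ∑ k, crossProduct u (δ k) = 0) ∧
    (∀ (δ : Fin n → Fin 3 → ℝ) (v : Fin 3 → ℝ), (∀ k, δ k = crossProduct (e k) v) →
        ∀ k, crossProduct u (δ k) = crossProduct (e k) (crossProduct u v)) :=
  acs_invariance_general n u eps r e he
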